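/- There exists a dynamic graph on a vertex set of 4 vertices that satisfies the Connectivity Time property with time T = 3 but is not T-Path Connected for any T ≥ 1 (some pair of vertices never lies in a common connected component of G_r for any round r). In other words, the Connectivity Time property does not imply T-Path Connectivity. -/
import Mathlib


/-- `G` is `T`-Path Connected: for every round `r` and every pair of vertices `u, v`,
there is a round `i ∈ [r, r+T-1]` in which `u` and `v` lie in the same connected
component of `G i`. -/
def TPathConnected {V : Type*} (G : ℕ → SimpleGraph V) (T : ℕ) : Prop :=
  ∀ r : ℕ, ∀ u v : V, ∃ i ∈ Set.Icc r (r + T - 1), (G i).Reachable u v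

/-- `G` satisfies the Connectivity Time property with time `T`: for every round `r`,
the graph whose edges are those present in at least one `G i`, `i ∈ [r, r+T-1]`,
is connected. -/
def ConnectivityTime {V : Type*} (G : ℕ → SimpleGraph V) (T : ℕ) : Prop :=
  ∀ r : ℕ, (⨆ i ∈ Set.Icc r (r + T - 1), G i).Connected

/-- Graph with edges 0-1 and 2-3. -/
def GraphA : SimpleGraph (Fin 4) :=
  SimpleGraph.fromRel (fun u v => (u = 0 ∧ v = 1) ∨ (u = 2 ∧ v = 3))

/-- Graph with edge 1-2. -/
def GraphB : SimpleGraph (Fin 4) :=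
  SimpleGraph.fromRel (fun u v => u = 1 ∧ v = 2)

instance : DecidableRel GraphA.Adj := fun _ _ => inferInstanceAs (Decidable (_ ∧ _))
instance : DecidableRel GraphB.Adj := fun _ _ => inferInstanceAs (Decidable (_ ∧ _))

lemma graphA_not_reach : ¬ GraphA.Reachable 0 3 := by decide
lemma graphB_not_reach : ¬ GraphB.Reachable 0 3 := by decide

lemma sup_connected : (GraphA ⊔ GraphB).Connected := by
  constructor
  · decide

/-- There is a dynamic graph on 4 vertices that satisfies the Connectivity Time
property with `T = 3`, yet some pair of vertices never lies in a common connected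
component of `G r`, and hence the graph is not `T`-Path Connected for any `T ≥ 1`:
the Connectivity Time property does not imply `T`-Path Connectivity. -/
theorem exists_connectivityTime_not_tPathConnected :
    ∃ G : ℕ → SimpleGraph (Fin 4),
      ConnectivityTime G 3 ∧
        (∃ u v : Fin 4, ∀ r : ℕ, ¬ (G r).Reachable u v) ∧
        ∀ T : ℕ, 1 ≤ T → ¬ TPathConnected G T := by
  refine ⟨fun r => if r % 2 = 0 then GraphA else GraphB, ?_, ?_, ?_⟩
  · intro r
    have hle : GraphA ⊔ GraphB ≤ ⨆ i ∈ Set.Icc r (r + 3 - 1),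
        (if i % 2 = 0 then GraphA else GraphB) := by
      apply sup_le
      · rcases Nat.even_or_odd r with h | h
        · have := le_iSup₂ (f := fun i (_ : i ∈ Set.Icc r (r + 3 - 1)) =>
            (if i % 2 = 0 then GraphA else GraphB)) r ⟨le_refl r, by omega⟩
          have h1 : r % 2 = 0 := Nat.even_iff.mp h
          simpa [h1] using this
        · have := le_iSup₂ (f := fun i (_ : i ∈ Set.Icc r (r + 3 - 1)) =>
            (if i % 2 = 0 then GraphA else GraphB)) (r + 1) ⟨by omega, by omega⟩
          have h1 : (r + 1) % 2 = 0 := by have := Nat.odd_iff.mp h; omega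
          simpa [h1] using this
      · rcases Nat.even_or_odd r with h | h
        · have := le_iSup₂ (f := fun i (_ : i ∈ Set.Icc r (r + 3 - 1)) =>
            (if i % 2 = 0 then GraphA else GraphB)) (r + 1) ⟨by omega, by omega⟩
          have h1 : (r + 1) % 2 = 1 := by have := Nat.even_iff.mp h; omega
          simpa [h1] using this
        · have := le_iSup₂ (f := fun i (_ : i ∈ Set.Icc r (r + 3 - 1)) =>
            (if i % 2 = 0 then GraphA else GraphB)) r ⟨le_refl r, by omega⟩
          have h1 : r % 2 = 1 := Nat.odd_iff.mp h
          simpa [h1] using this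
    exact sup_connected.mono hle
  · refine ⟨0, 3, fun r => ?_⟩
    by_cases h : r % 2 = 0 <;> simp [h, graphA_not_reach, graphB_not_reach]
  · intro T hT hTP
    obtain ⟨i, _, hreach⟩ := hTP 0 0 3
    by_cases h : i % 2 = 0 <;> simp [h] at hreach
    · exact graphA_not_reach hreach
    · exact graphB_not_reach hreach
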